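/- arXiv:2504.17955 — 3 statements merged into one kernel-verified Lean document; each statement's English description precedes it below -/
import Mathlib

section
/- If 0 < ρ < 1 and the sum over k ≥ 1 of arcsin(ρ^k) is at least π, then disks of radius ρ^k (for k = 1, 2, ...) placed with their diameters as chords of the unit circle can together cover the entire circumference of the unit circle; conversely, if the sum is less than π, they cannot cover the full circumference. -/
open Real Set Finset MeasureTheory

/-
Laying the arcs end to end, the `k`-th starting where the previous ones stop, covers
`[0, 2 ∑ arcsin (ρ^k))`, which contains `[0, 2π)` once the sum reaches `π`. Conversely,
Lebesgue measure is countably subadditive, so arcs covering `[0, 2π)` must have total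
length at least `2π`.
-/

theorem arcsin_le_pi_div_two_mul {x : ℝ} (hx₀ : 0 ≤ x) (hx₁ : x ≤ 1) :
    arcsin x ≤ π / 2 * x := by
  have hsin : 2 / π * arcsin x ≤ x := by
    simpa only [sin_arcsin (by linarith) hx₁] using
      mul_le_sin (arcsin_nonneg.2 hx₀) (arcsin_le_pi_div_two x)
  calc arcsin x = π / 2 * (2 / π * arcsin x) := by field_simp
    _ ≤ π / 2 * x := by gcongr

theorem summable_arcsin_pow_succ {ρ : ℝ} (hρ₀ : 0 ≤ ρ) (hρ₁ : ρ < 1) :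
    Summable fun k : ℕ => arcsin (ρ ^ (k + 1)) := by
  refine Summable.of_nonneg_of_le (fun k => arcsin_nonneg.2 (by positivity))
    (fun k => arcsin_le_pi_div_two_mul (by positivity) (pow_le_one₀ hρ₀ hρ₁.le)) ?_
  exact ((summable_geometric_of_lt_one hρ₀ hρ₁).mul_left (π / 2)).mul_right ρ |>.congr
    fun k => by ring

/-- For `x ∈ [0, s)` the least `n` with `x < ∑_{j<n} f j` is positive, and `x` lies in the
`(n-1)`-st interval. -/
theorem Ico_subset_iUnion_Icc_partialSums {f : ℕ → ℝ} {s : ℝ} (hf : HasSum f s) :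
    Ico 0 s ⊆ ⋃ k, Icc (∑ j ∈ range k, f j) (∑ j ∈ range k, f j + f k) := by
  classical
  intro x ⟨hx₀, hxs⟩
  have hex : ∃ n, x < ∑ j ∈ range n, f j :=
    (hf.tendsto_sum_nat.eventually (eventually_gt_nhds hxs)).exists
  obtain ⟨k, hk⟩ : ∃ k, Nat.find hex = k + 1 :=
    Nat.exists_eq_succ_of_ne_zero fun h => by
      have := Nat.find_spec hex
      simp only [h, range_zero, sum_empty] at this
      linarith
  have hlt := Nat.find_spec hex
  rw [hk, sum_range_succ] at hlt
  exact mem_iUnion.2 ⟨k, not_lt.1 (Nat.find_min hex (hk ▸ k.lt_succ_self)), hlt.le⟩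

theorem le_tsum_of_Ico_subset_iUnion_Icc {ℓ : ℕ → ℝ} (hℓ₀ : ∀ k, 0 ≤ ℓ k) (hℓ : Summable ℓ)
    {c : ℝ} {a : ℕ → ℝ} (hcover : Ico 0 c ⊆ ⋃ k, Icc (a k) (a k + ℓ k)) :
    c ≤ ∑' k, ℓ k := by
  have hvol : ENNReal.ofReal c ≤ ENNReal.ofReal (∑' k, ℓ k) :=
    calc ENNReal.ofReal c = volume (Ico 0 c) := by rw [Real.volume_Ico, sub_zero]
      _ ≤ volume (⋃ k, Icc (a k) (a k + ℓ k)) := measure_mono hcover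
      _ ≤ ∑' k, volume (Icc (a k) (a k + ℓ k)) := measure_iUnion_le _
      _ = ∑' k, ENNReal.ofReal (ℓ k) := by simp only [Real.volume_Icc, add_sub_cancel_left]
      _ = ENNReal.ofReal (∑' k, ℓ k) := (ENNReal.ofReal_tsum_of_nonneg hℓ₀ hℓ).symm
  rcases (ENNReal.ofReal_le_ofReal_iff').1 hvol with h | h
  · exact h
  · exact h.trans (tsum_nonneg hℓ₀)

/-- If `∑_{k≥1} arcsin (ρ^k) ≥ π`, then closed arcs of central angle `2 arcsin (ρ^k)`
(the arcs covered by disks of radius `ρ^k` placed with diameters as chords of the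
unit circle) can be placed to cover the whole circumference (parameterized by
central angle in `[0, 2π)`); if the sum is `< π`, no placement covers it. -/
theorem cover_circumference_iff_angle_sum (ρ : ℝ) (hρ0 : 0 < ρ) (hρ1 : ρ < 1) :
    ((Real.pi ≤ ∑' k : ℕ, Real.arcsin (ρ ^ (k + 1))) →
      ∃ a : ℕ → ℝ, Set.Ico (0 : ℝ) (2 * Real.pi) ⊆
        ⋃ k : ℕ, Set.Icc (a k) (a k + 2 * Real.arcsin (ρ ^ (k + 1)))) ∧
    ((∑' k : ℕ, Real.arcsin (ρ ^ (k + 1))) < Real.pi →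
      ¬ ∃ a : ℕ → ℝ, Set.Ico (0 : ℝ) (2 * Real.pi) ⊆
        ⋃ k : ℕ, Set.Icc (a k) (a k + 2 * Real.arcsin (ρ ^ (k + 1)))) := by
  have hsum := (summable_arcsin_pow_succ hρ0.le hρ1).mul_left 2
  refine ⟨fun hge => ⟨fun k => ∑ j ∈ range k, 2 * arcsin (ρ ^ (j + 1)), ?_⟩,
    fun hlt ⟨a, hcover⟩ => ?_⟩
  · refine (Set.Ico_subset_Ico_right ?_).trans (Ico_subset_iUnion_Icc_partialSums hsum.hasSum)
    rw [tsum_mul_left]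
    linarith
  · have := le_tsum_of_Ico_subset_iUnion_Icc
      (fun k => mul_nonneg zero_le_two (arcsin_nonneg.2 (pow_nonneg hρ0.le _))) hsum hcover
    rw [tsum_mul_left] at this
    linarith
end

section
/- A closed disk of radius r can be covered by an L-layer lattice of regular hexagons of side length s = 2r/(3L−2). Equivalently, the inradius of the hexagonal region formed by an L-layer lattice of hexagons of side length s is at least ((3L/2)−1)·s for even L. -/
/-!
Put the hexagons around the points `hexCenter s (m, n) = (3/2 m s, √3/2 (m + 2n) s)`. The
hexagon of side `s` about such a point is its Voronoi cell in this lattice, so every point of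
the plane lies in the hexagon of a nearest lattice point. A hexagon lies within distance `s` of
its centre, and `3/2 s |m|`, `3/2 s |n|`, `3/2 s |m + n|` are bounded by the norm of the centre
(they are the lengths of its projections on three directions `60°` apart). Hence every point
of the open disc of radius `(3L/2 - 1) s` lies in one of the `3L² - 3L + 1` hexagons with
`|m|, |n|, |m + n| ≤ L - 1`, and this finite union of compact hexagons contains the closure.
-/

open Real Complex

/-- The regular hexagon with center `c` and circumradius (= side length) `s`,
as a subset of the Euclidean plane (modeled by `ℂ`). -/
noncomputable def regularHexagon (c : ℂ) (s : ℝ) : Set ℂ :=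
  convexHull ℝ
    (Set.range fun k : Fin 6 => c + (s : ℂ) * Complex.exp ((k : ℕ) * (Real.pi / 3) * Complex.I))

lemma exp_pi_div_three_mul_I : exp (π / 3 * I) = 1 / 2 + √3 / 2 * I := by
  rw [show (π : ℂ) / 3 = ((π / 3 : ℝ) : ℂ) by push_cast; ring, exp_mul_I, ← ofReal_cos,
    ← ofReal_sin, cos_pi_div_three, sin_pi_div_three]
  push_cast; ring

lemma exp_pi_div_three_mul_I_sq : exp (π / 3 * I) ^ 2 = exp (π / 3 * I) - 1 := by
  have h3 : (√3 : ℂ) ^ 2 = 3 := by rw [← ofReal_pow, sq_sqrt (by norm_num)]; norm_num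
  rw [exp_pi_div_three_mul_I]
  linear_combination (I ^ 2 / 4) * h3 + (3 / 4 : ℂ) * I_sq

lemma add_mul_exp_pi_div_three_pow_mem_regularHexagon (c : ℂ) (s : ℝ) {k : ℕ} (hk : k < 6) :
    c + s * exp (π / 3 * I) ^ k ∈ regularHexagon c s := by
  refine subset_convexHull ℝ _ ⟨⟨k, hk⟩, ?_⟩
  rw [← Complex.exp_nat_mul]
  ring_nf

lemma regularHexagon_subset_closedBall (c : ℂ) (s : ℝ) :
    regularHexagon c s ⊆ Metric.closedBall c |s| := by
  refine convexHull_min ?_ (convex_closedBall c |s|)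
  rintro _ ⟨k, rfl⟩
  rw [Metric.mem_closedBall, dist_eq_norm, add_sub_cancel_left, norm_mul,
    show ((k : ℕ) : ℂ) * (π / 3) * I = ((k * (π / 3) : ℝ) : ℂ) * I by push_cast; rfl,
    norm_exp_ofReal_mul_I, norm_real, mul_one, Real.norm_eq_abs]

lemma isClosed_regularHexagon (c : ℂ) (s : ℝ) : IsClosed (regularHexagon c s) :=
  ((Set.finite_range _).isCompact_convexHull ℝ).isClosed

lemma mem_regularHexagon_of_abs_le {s : ℝ} (hs : 0 < s) (c w : ℂ)
    (h₁ : 3 * |w.re| + √3 * |w.im| ≤ 3 * s) (h₂ : 2 * |w.im| ≤ √3 * s) :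
    c + w ∈ regularHexagon c s := by
  have vertex {k : ℕ} (hk : k < 6) := add_mul_exp_pi_div_three_pow_mem_regularHexagon c s hk
  set ζ := exp (π / 3 * I)
  have hζ : ζ = 1 / 2 + √3 / 2 * I := exp_pi_div_three_mul_I
  have hζ2 : ζ ^ 2 = ζ - 1 := exp_pi_div_three_mul_I_sq
  obtain ⟨σ, hσy, hB, hA⟩ : ∃ σ : ℝ, w.im = σ * |w.im| ∧
      c + s * (1 / 2 + σ * (√3 / 2) * I) ∈ regularHexagon c s ∧
      c + s * (-1 / 2 + σ * (√3 / 2) * I) ∈ regularHexagon c s := by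
    rcases le_total 0 w.im with hy | hy
    · refine ⟨1, by rw [abs_of_nonneg hy, one_mul], ?_, ?_⟩
      · convert vertex (k := 1) (by norm_num) using 3; rw [pow_one, hζ]; push_cast; ring
      · convert vertex (k := 2) (by norm_num) using 3; rw [hζ2, hζ]; push_cast; ring
    · refine ⟨-1, by rw [abs_of_nonpos hy, neg_one_mul, neg_neg], ?_, ?_⟩
      · convert vertex (k := 5) (by norm_num) using 3
        rw [show ζ ^ 5 = 1 - ζ by linear_combination (ζ ^ 3 + ζ ^ 2 - 1) * hζ2, hζ]
        push_cast; ring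
      · convert vertex (k := 4) (by norm_num) using 3
        rw [show ζ ^ 4 = -ζ by linear_combination (ζ ^ 2 + ζ) * hζ2, hζ]
        push_cast; ring
  have h0 : c + s * 1 ∈ regularHexagon c s := by simpa using vertex (k := 0) (by norm_num)
  have h3 : c + s * (-1) ∈ regularHexagon c s := by
    convert vertex (k := 3) (by norm_num) using 3
    linear_combination (-ζ - 1) * hζ2
  have hq : (0 : ℝ) < √3 := by positivity
  have hq2 : √3 * √3 = 3 := Real.mul_self_sqrt (by norm_num)
  -- `c + w` lies at parameter `u` on the horizontal chord at height `w.im`, whose ends are the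
  -- points at parameter `t` on the edges from `c - s` to the vertex of `hA` and from `c + s` to
  -- the vertex of `hB`
  set t := 2 * |w.im| / (√3 * s)
  set e := s - |w.im| / √3
  set u := (w.re + e) / (2 * e)
  have ht : t * (√3 * s) = 2 * |w.im| := div_mul_cancel₀ _ (by positivity)
  have he : e * √3 = s * √3 - |w.im| := by simp only [e]; field_simp
  have he2 : s / 2 ≤ e := by nlinarith
  have hu : u * (2 * e) = w.re + e := div_mul_cancel₀ _ (by linarith)
  have hre : |w.re| ≤ e := by nlinarith
  have ht0 : 0 ≤ t := by positivity
  have ht1 : t ≤ 1 := (div_le_one (by positivity)).2 h₂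
  have hte : t * s = 2 * (s - e) :=
    mul_left_cancel₀ hq.ne' (by linear_combination ht + 2 * he)
  have hu0 : 0 ≤ u := by nlinarith [neg_abs_le w.re]
  have hu1 : u ≤ 1 := by nlinarith [le_abs_self w.re]
  clear_value t e u
  have hconv : Convex ℝ (regularHexagon c s) := convex_convexHull ℝ _
  have hl := hconv h3 hA (sub_nonneg.2 ht1) ht0 (sub_add_cancel 1 t)
  have hr := hconv h0 hB (sub_nonneg.2 ht1) ht0 (sub_add_cancel 1 t)
  convert hconv hl hr (sub_nonneg.2 hu1) hu0 (sub_add_cancel 1 u) using 1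
  apply Complex.ext <;>
    simp only [add_re, add_im, smul_re, smul_im, mul_re, mul_im, ofReal_re, ofReal_im, I_re, I_im,
      one_re, one_im, neg_re, neg_im, div_ofNat_re, div_ofNat_im, smul_eq_mul]
  · linear_combination (u - 1 / 2) * hte - hu
  · linear_combination hσy - (σ / 2) * ht

noncomputable def hexCenter (s : ℝ) (p : ℤ × ℤ) : ℂ :=
  ⟨3 / 2 * p.1 * s, √3 / 2 * (p.1 + 2 * p.2) * s⟩

lemma hexCenter_add (s : ℝ) (p q : ℤ × ℤ) :
    hexCenter s (p + q) = hexCenter s p + hexCenter s q := by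
  apply Complex.ext <;> simp [hexCenter] <;> ring

lemma mul_re_add_mul_im_le_of_norm_le {s : ℝ} (hs : 0 < s) {w : ℂ} (a b : ℤ)
    (h : ‖w‖ ≤ ‖w - hexCenter s (a, b)‖) :
    3 * a * w.re + √3 * (a + 2 * b) * w.im ≤ 3 * (a ^ 2 + a * b + b ^ 2) * s := by
  have hq2 : √3 ^ 2 = 3 := Real.sq_sqrt (by norm_num)
  have h2 := pow_le_pow_left₀ (norm_nonneg _) h 2
  simp only [Complex.sq_norm, normSq_apply, sub_re, sub_im, hexCenter] at h2
  refine le_of_mul_le_mul_left ?_ hs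
  linear_combination h2 + ((a + 2 * b) ^ 2 * s ^ 2 / 4 : ℝ) * hq2

lemma mem_regularHexagon_of_forall_norm_sub_le {s : ℝ} (hs : 0 < s) {z : ℂ} {p : ℤ × ℤ}
    (hp : ∀ q, ‖z - hexCenter s p‖ ≤ ‖z - hexCenter s q‖) :
    z ∈ regularHexagon (hexCenter s p) s := by
  set w := z - hexCenter s p
  have bisector (a b : ℤ) :=
    mul_re_add_mul_im_le_of_norm_le hs a b (w := w) (by
      simpa [w, hexCenter_add, sub_sub] using hp (p + (a, b)))
  have h₁ := bisector 1 0
  have h₂ := bisector (-1) 0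
  have h₃ := bisector 0 1
  have h₄ := bisector 0 (-1)
  have h₅ := bisector 1 (-1)
  have h₆ := bisector (-1) 1
  norm_num at h₁ h₂ h₃ h₄ h₅ h₆
  have hq2 : √3 * √3 = 3 := Real.mul_self_sqrt (by norm_num)
  rw [← add_sub_cancel (hexCenter s p) z]
  apply mem_regularHexagon_of_abs_le hs
  · rcases abs_cases w.re with ⟨hx, -⟩ | ⟨hx, -⟩ <;> rcases abs_cases w.im with ⟨hy, -⟩ | ⟨hy, -⟩ <;>
      rw [hx, hy] <;> linarith
  · rcases abs_cases w.im with ⟨hy, -⟩ | ⟨hy, -⟩ <;> rw [hy] <;>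
      nlinarith [mul_le_mul_of_nonneg_left h₃ (Real.sqrt_nonneg 3),
        mul_le_mul_of_nonneg_left h₄ (Real.sqrt_nonneg 3)]

lemma abs_le_norm_hexCenter (s : ℝ) (p : ℤ × ℤ) :
    |3 / 2 * s * p.1| ≤ ‖hexCenter s p‖ ∧ |3 / 2 * s * p.2| ≤ ‖hexCenter s p‖ ∧
      |3 / 2 * s * (p.1 + p.2)| ≤ ‖hexCenter s p‖ := by
  have hq2 : √3 ^ 2 = 3 := Real.sq_sqrt (by norm_num)
  have hc : ‖hexCenter s p‖ ^ 2 = (3 / 2 * p.1 * s) ^ 2 + (√3 / 2 * (p.1 + 2 * p.2) * s) ^ 2 := by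
    rw [Complex.sq_norm, normSq_apply]; simp only [hexCenter]; ring
  rw [← abs_norm (hexCenter s p)]
  refine ⟨?_, ?_, ?_⟩ <;> rw [← sq_le_sq, hc] <;>
    nlinarith [sq_nonneg (s * (p.1 - p.2)), sq_nonneg (s * (2 * p.1 + p.2))]

lemma exists_forall_norm_sub_hexCenter_le {s : ℝ} (hs : 0 < s) (z : ℂ) :
    ∃ p, ∀ q, ‖z - hexCenter s p‖ ≤ ‖z - hexCenter s q‖ := by
  refine Filter.Tendsto.exists_forall_le ?_
  have hnorm : Filter.Tendsto (fun p : ℤ × ℤ => ‖p‖) Filter.cofinite Filter.atTop := by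
    rw [← Filter.cocompact_eq_cofinite]; exact tendsto_norm_cocompact_atTop
  refine Filter.tendsto_atTop_mono (fun p => ?_) (Filter.tendsto_atTop_add_const_right _ (-‖z‖)
    (hnorm.const_mul_atTop (by positivity : 0 < 3 / 2 * s)))
  obtain ⟨h₁, h₂, -⟩ := abs_le_norm_hexCenter s p
  rw [abs_mul, abs_of_pos (by positivity : 0 < 3 / 2 * s)] at h₁ h₂
  have := norm_le_norm_add_norm_sub' (hexCenter s p) z
  rw [Prod.norm_def, Int.norm_eq_abs, Int.norm_eq_abs, mul_max_of_nonneg _ _ (by positivity)]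
  linarith [max_le h₁ h₂, norm_sub_rev z (hexCenter s p)]

noncomputable def hexSet (a : ℕ) : Finset (ℤ × ℤ) :=
  (Finset.Icc (-(a : ℤ)) a ×ˢ Finset.Icc (-(a : ℤ)) a).filter fun p => |p.1 + p.2| ≤ a

lemma mem_hexSet {a : ℕ} {p : ℤ × ℤ} :
    p ∈ hexSet a ↔ |p.1| ≤ a ∧ |p.2| ≤ a ∧ |p.1 + p.2| ≤ a := by
  simp [hexSet, abs_le, and_assoc]

lemma card_filter_abs_add_le {a : ℕ} {m : ℤ} (hm : |m| ≤ a) :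
    ((Finset.Icc (-(a : ℤ)) a).filter fun n => |m + n| ≤ a).card = 2 * a + 1 - m.natAbs := by
  have : ((Finset.Icc (-(a : ℤ)) a).filter fun n => |m + n| ≤ a) =
      Finset.Icc (max (-(a : ℤ)) (-a - m)) (min (a : ℤ) (a - m)) := by
    ext n; simp only [Finset.mem_filter, Finset.mem_Icc, abs_le]; omega
  rw [this, Int.card_Icc]
  rw [abs_le] at hm
  omega

lemma sum_Icc_sub_natAbs (a : ℕ) :
    ∑ m ∈ Finset.Icc (-(a : ℤ)) a, (2 * a + 1 - m.natAbs) = 3 * a ^ 2 + 3 * a + 1 := by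
  induction a with
  | zero => simp
  | succ a ih =>
    have hIcc : Finset.Icc (-(a + 1 : ℕ) : ℤ) (a + 1 : ℕ) =
        insert (-(a + 1 : ℤ)) (insert (a + 1 : ℤ) (Finset.Icc (-(a : ℤ)) a)) := by
      ext m; simp only [Finset.mem_Icc, Finset.mem_insert]; omega
    rw [hIcc, Finset.sum_insert (by simp only [Finset.mem_insert, Finset.mem_Icc]; omega),
      Finset.sum_insert (by simp),
      Finset.sum_congr rfl (g := fun m : ℤ => 2 * a + 1 - m.natAbs + 2) (fun m hm => by
        simp only [Finset.mem_Icc] at hm; omega), Finset.sum_add_distrib, ih,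
      Finset.sum_const, Int.card_Icc, smul_eq_mul, add_sq]
    omega

lemma card_hexSet (a : ℕ) : (hexSet a).card = 3 * a ^ 2 + 3 * a + 1 := by
  rw [hexSet, Finset.card_filter, Finset.sum_product, ← sum_Icc_sub_natAbs]
  refine Finset.sum_congr rfl fun m hm => ?_
  rw [← card_filter_abs_add_le (abs_le.2 (Finset.mem_Icc.1 hm)), Finset.card_filter]

lemma mem_hexSet_of_norm_hexCenter_lt {s : ℝ} (hs : 0 < s) {a : ℕ} {p : ℤ × ℤ}
    (h : ‖hexCenter s p‖ < 3 / 2 * s * (a + 1)) : p ∈ hexSet a := by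
  have coord {k : ℤ} (hk : |3 / 2 * s * k| ≤ ‖hexCenter s p‖) : |k| ≤ a := by
    rw [abs_mul, abs_of_pos (by positivity)] at hk
    have : |(k : ℝ)| < a + 1 := lt_of_mul_lt_mul_left (hk.trans_lt h) (by positivity)
    exact Int.lt_add_one_iff.1 (by exact_mod_cast this)
  obtain ⟨h₁, h₂, h₃⟩ := abs_le_norm_hexCenter s p
  exact mem_hexSet.2 ⟨coord h₁, coord h₂, coord (by exact_mod_cast h₃)⟩

lemma ball_subset_iUnion_hexSet {s : ℝ} (hs : 0 < s) (a : ℕ) :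
    Metric.ball 0 ((3 * (a + 1) / 2 - 1) * s) ⊆
      ⋃ p ∈ hexSet a, regularHexagon (hexCenter s p) s := by
  intro z hz
  rw [mem_ball_zero_iff] at hz
  obtain ⟨p, hp⟩ := exists_forall_norm_sub_hexCenter_le hs z
  have hzp := mem_regularHexagon_of_forall_norm_sub_le hs hp
  have hdist : ‖z - hexCenter s p‖ ≤ s := by
    simpa [dist_eq_norm, abs_of_pos hs] using regularHexagon_subset_closedBall _ s hzp
  refine Set.mem_biUnion (mem_hexSet_of_norm_hexCenter_lt hs ?_) hzp
  linarith [norm_le_norm_add_norm_sub' (hexCenter s p) z, norm_sub_rev z (hexCenter s p)]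

-- Points of the boundary circle may be vertices shared with hexagons outside the patch;
-- passing to the closure avoids choosing among them.
lemma closedBall_subset_iUnion_hexSet {s : ℝ} (hs : 0 < s) (a : ℕ) :
    Metric.closedBall 0 ((3 * (a + 1) / 2 - 1) * s) ⊆
      ⋃ p ∈ hexSet a, regularHexagon (hexCenter s p) s := by
  have hρ : 0 < (3 * (a + 1) / 2 - 1) * s := mul_pos (by linarith [a.cast_nonneg (α := ℝ)]) hs
  rw [← closure_ball _ hρ.ne']
  exact closure_minimal (ball_subset_iUnion_hexSet hs a)
    ((hexSet a).finite_toSet.isClosed_biUnion fun p _ => isClosed_regularHexagon _ s)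

lemma Finset.exists_fin_biUnion_subset_iUnion {α β : Type*} {S : Finset α} {N : ℕ}
    (hS : S.card = N) (f : α → Set β) : ∃ g : Fin N → α, ⋃ p ∈ S, f p ⊆ ⋃ i, f (g i) := by
  refine ⟨fun i => (S.equivFinOfCardEq hS).symm i, fun z hz => ?_⟩
  obtain ⟨p, hp, hz⟩ := Set.mem_iUnion₂.1 hz
  exact Set.mem_iUnion.2 ⟨S.equivFinOfCardEq hS ⟨p, hp⟩, by simpa using hz⟩

theorem disk_covered_by_hexagonal_lattice_general (L : ℕ) (hL : 2 ≤ L)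
    (r s : ℝ) (hr : 0 < r) (hs : s = 2 * r / (3 * L - 2)) :
    r = ((3 * (L : ℝ) / 2) - 1) * s ∧
    ∃ centers : Fin (3 * L ^ 2 - 3 * L + 1) → ℂ,
      Metric.closedBall (0 : ℂ) r ⊆ ⋃ i, regularHexagon (centers i) s := by
  have hL' : (2 : ℝ) ≤ L := by exact_mod_cast hL
  have hr_eq : r = ((3 * (L : ℝ) / 2) - 1) * s := by
    rw [hs]; field_simp [show (3 * L - 2 : ℝ) ≠ 0 by linarith]
  have hs0 : 0 < s := by rw [hs]; exact div_pos (by positivity) (by linarith)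
  obtain ⟨a, rfl⟩ : ∃ a, L = a + 1 := ⟨L - 1, by omega⟩
  have hcard : (hexSet a).card = 3 * (a + 1) ^ 2 - 3 * (a + 1) + 1 := by
    rw [card_hexSet]; ring_nf; omega
  obtain ⟨g, hg⟩ := Finset.exists_fin_biUnion_subset_iUnion hcard
    fun p => regularHexagon (hexCenter s p) s
  refine ⟨hr_eq, fun i => hexCenter s (g i), ?_⟩
  rw [hr_eq]
  push_cast
  exact (closedBall_subset_iUnion_hexSet hs0 a).trans hg

/-- A closed disk of radius `r` can be covered by an `L`-layer hexagonal lattice of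
`3 L² - 3 L + 1` regular hexagons of side length `s = 2 r / (3 L - 2)`; moreover for
even `L` the lattice of hexagons of side `s` covers the disk of radius
`((3 L / 2) - 1) * s` about its center (its inradius is at least that). -/
theorem disk_covered_by_hexagonal_lattice (L : ℕ) (hL : 2 ≤ L) (hLeven : Even L)
    (r s : ℝ) (hr : 0 < r) (hs : s = 2 * r / (3 * L - 2)) :
    r = ((3 * (L : ℝ) / 2) - 1) * s ∧
    ∃ centers : Fin (3 * L ^ 2 - 3 * L + 1) → ℂ,
      Metric.closedBall (0 : ℂ) r ⊆ ⋃ i, regularHexagon (centers i) s :=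
  disk_covered_by_hexagonal_lattice_general L hL r s hr hs
end

section
/- In the doubling strategy for finding all k POIs, the total distance traveled is at most d·n + 2d·E, where E = ∑_{i=1}^{k−1} e_i: the first search travels at most d·n, and the i-th subsequent search occurs in an area of radius 2^{⌈log₂ e_i⌉} < 2e_i, costing at most d·2^{⌈log₂ e_i⌉} ≤ 2d·e_i distance. -/
open Real Finset

theorem zpow_ceil_logb_lt_mul {b x : ℝ} (hb : 1 < b) (hx : 0 < x) :
    b ^ ⌈logb b x⌉ < b * x :=
  calc b ^ ⌈logb b x⌉ = b ^ (⌈logb b x⌉ : ℝ) := (rpow_intCast b _).symm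
    _ < b ^ (logb b x + 1) := rpow_lt_rpow_of_exponent_lt hb (Int.ceil_lt_add_one _)
    _ = b * x := by
      rw [rpow_add_one (by positivity), rpow_logb (by positivity) hb.ne' hx, mul_comm]

theorem sum_mul_zpow_ceil_logb_le {ι : Type*} (s : Finset ι) {b d : ℝ} (hb : 1 < b)
    (hd : 0 ≤ d) {e : ι → ℝ} (he : ∀ i ∈ s, 0 < e i) :
    ∑ i ∈ s, d * b ^ ⌈logb b (e i)⌉ ≤ b * d * ∑ i ∈ s, e i := by
  rw [mul_sum]
  refine sum_le_sum fun i hi => ?_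
  calc d * b ^ ⌈logb b (e i)⌉ ≤ d * (b * e i) :=
        mul_le_mul_of_nonneg_left (zpow_ceil_logb_lt_mul hb (he i hi)).le hd
    _ = b * d * e i := by ring

theorem doubling_strategy_distance_bound_general (d n : ℝ) (hd : 0 ≤ d)
    (k : ℕ) (e : Fin (k - 1) → ℝ) (he : ∀ i, 1 ≤ e i) :
    (∀ i, (2 : ℝ) ^ (⌈Real.logb 2 (e i)⌉ : ℤ) < 2 * e i) ∧
    d * n + ∑ i, d * (2 : ℝ) ^ (⌈Real.logb 2 (e i)⌉ : ℤ)
      ≤ d * n + 2 * d * ∑ i, e i := by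
  have he_pos : ∀ i, 0 < e i := fun i => one_pos.trans_le (he i)
  refine ⟨fun i => zpow_ceil_logb_lt_mul one_lt_two (he_pos i), ?_⟩
  gcongr
  exact sum_mul_zpow_ceil_logb_le _ one_lt_two hd fun i _ => he_pos i

/-- Distance traveled by the doubling strategy: if the single-POI search travels at
most `d r` in a radius-`r` area, the first search travels at most `d n` and the
`i`-th subsequent search occurs in an area of radius `2^{⌈log₂ eᵢ⌉} < 2 eᵢ`, so the
total distance is at most `d n + 2 d E` with `E = ∑ eᵢ`. -/
theorem doubling_strategy_distance_bound (d n : ℝ) (hd : 0 ≤ d) (hn : 1 ≤ n)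
    (k : ℕ) (hk : 1 ≤ k) (e : Fin (k - 1) → ℝ) (he : ∀ i, 1 ≤ e i) :
    (∀ i, (2 : ℝ) ^ (⌈Real.logb 2 (e i)⌉ : ℤ) < 2 * e i) ∧
    d * n + ∑ i, d * (2 : ℝ) ^ (⌈Real.logb 2 (e i)⌉ : ℤ)
      ≤ d * n + 2 * d * ∑ i, e i :=
  doubling_strategy_distance_bound_general d n hd k e he
end
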